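/- arXiv:0705.1042 — 3 statements merged into one kernel-verified Lean document; each statement's English description precedes it below -/
import Mathlib

section
/- If d and d' are Möbius equivalent metrics on the same set X, then (X,d) is Ptolemy if and only if (X,d') is Ptolemy. -/
/-!
For a quadruple of distinct points, dividing the Ptolemy inequality by `d(x,u) d(y,v)` rewrites it
as `cr(x,y,u,v) ≤ 1 + cr(x,v,u,y)` in terms of the cross ratio
`cr(x,y,z,w) = d(x,y) d(z,w) / (d(x,z) d(y,w))`, which Möbius equivalent metrics share.
For a quadruple with a repeated point the Ptolemy inequality holds in every metric space.
-/

section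

variable {X : Type*}

noncomputable def crossRatio (m : MetricSpace X) (x y z w : X) : ℝ :=
  m.dist x y * m.dist z w / (m.dist x z * m.dist y w)

def MoebiusEquivalent (m m' : MetricSpace X) : Prop :=
  ∀ x y z w : X, x ≠ y → x ≠ z → x ≠ w → y ≠ z → y ≠ w → z ≠ w →
    crossRatio m x y z w = crossRatio m' x y z w

theorem MoebiusEquivalent.symm {m m' : MetricSpace X} (h : MoebiusEquivalent m m') :
    MoebiusEquivalent m' m :=
  fun x y z w hxy hxz hxw hyz hyw hzw => (h x y z w hxy hxz hxw hyz hyw hzw).symm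

def IsPtolemy (m : MetricSpace X) : Prop :=
  ∀ x y u v : X, m.dist x y * m.dist u v ≤ m.dist x u * m.dist y v + m.dist x v * m.dist y u

theorem ptolemy_of_not_distinct (m : MetricSpace X) {x y u v : X}
    (h : x = y ∨ u = v ∨ x = u ∨ x = v ∨ y = u ∨ y = v) :
    m.dist x y * m.dist u v ≤ m.dist x u * m.dist y v + m.dist x v * m.dist y u := by
  let _ := m
  rcases h with rfl | rfl | rfl | rfl | rfl | rfl
  · simp only [dist_self, zero_mul]; positivity
  · simp only [dist_self, mul_zero]; positivity
  · rw [dist_self, zero_mul, zero_add, dist_comm y x, mul_comm]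
  · rw [dist_self, zero_mul, add_zero, dist_comm y x, dist_comm u x, mul_comm]
  · rw [dist_self, mul_zero, add_zero]
  · rw [dist_self, mul_zero, zero_add, dist_comm u y]

theorem ptolemy_iff_crossRatio (m : MetricSpace X) {x y u v : X} (hxu : x ≠ u) (hyv : y ≠ v) :
    m.dist x y * m.dist u v ≤ m.dist x u * m.dist y v + m.dist x v * m.dist y u ↔
      crossRatio m x y u v ≤ 1 + crossRatio m x v u y := by
  let _ := m
  have hpos : 0 < dist x u * dist y v := mul_pos (dist_pos.2 hxu) (dist_pos.2 hyv)
  rw [crossRatio, crossRatio, dist_comm u y, dist_comm v y, div_le_iff₀ hpos, add_mul,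
    one_mul, div_mul_cancel₀ _ hpos.ne']

theorem IsPtolemy.of_moebiusEquivalent {m m' : MetricSpace X} (h : MoebiusEquivalent m m')
    (hm : IsPtolemy m) : IsPtolemy m' := by
  intro x y u v
  by_cases hd : x = y ∨ u = v ∨ x = u ∨ x = v ∨ y = u ∨ y = v
  · exact ptolemy_of_not_distinct m' hd
  push Not at hd
  obtain ⟨hxy, huv, hxu, hxv, hyu, hyv⟩ := hd
  rw [ptolemy_iff_crossRatio m' hxu hyv, ← h x y u v hxy hxu hxv hyu hyv huv,
    ← h x v u y hxv hxu hxy huv.symm hyv.symm hyu.symm]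
  exact (ptolemy_iff_crossRatio m hxu hyv).1 (hm x y u v)

end

theorem moebius_equivalent_ptolemy {X : Type*} (m m' : MetricSpace X)
    (hmob : ∀ x y z w : X, x ≠ y → x ≠ z → x ≠ w → y ≠ z → y ≠ w → z ≠ w →
      (m.dist x y * m.dist z w) / (m.dist x z * m.dist y w) =
        (m'.dist x y * m'.dist z w) / (m'.dist x z * m'.dist y w)) :
    (∀ x y u v : X,
        m.dist x y * m.dist u v ≤ m.dist x u * m.dist y v + m.dist x v * m.dist y u) ↔
      (∀ x y u v : X,
        m'.dist x y * m'.dist u v ≤ m'.dist x u * m'.dist y v + m'.dist x v * m'.dist y u) :=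
  ⟨IsPtolemy.of_moebiusEquivalent hmob,
    IsPtolemy.of_moebiusEquivalent (MoebiusEquivalent.symm hmob)⟩
end

section
/- Given a metric space X, define on the set Σ of unordered pairs {x₁,x₂} of points of X (allowing x₁ = x₂) the function D({x₁,x₂},{y₁,y₂}) = (1/4)(d(x₁,y₁)+d(x₁,y₂)+d(x₂,y₁)+d(x₂,y₂)) if {x₁,x₂} ≠ {y₁,y₂} and 0 otherwise. Then D is a metric on Σ. -/
/-- The averaged four-point sum on unordered pairs. -/
noncomputable def pairSum {X : Type*} [MetricSpace X] : Sym2 X → Sym2 X → ℝ :=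
  Sym2.lift₂
    ⟨fun x₁ x₂ y₁ y₂ => (dist x₁ y₁ + dist x₁ y₂ + dist x₂ y₁ + dist x₂ y₂) / 4,
     fun _ _ _ _ => ⟨by dsimp only; ring, by dsimp only; ring⟩⟩

open scoped Classical in
/-- The metric on the space of unordered pairs. -/
noncomputable def pairDist {X : Type*} [MetricSpace X] (p q : Sym2 X) : ℝ :=
  if p = q then 0 else pairSum p q

lemma pairSum_mk {X : Type*} [MetricSpace X] (a b c d : X) :
    pairSum (s(a, b)) (s(c, d)) =
      (dist a c + dist a d + dist b c + dist b d) / 4 := rfl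

lemma pairSum_nonneg {X : Type*} [MetricSpace X] (p q : Sym2 X) : 0 ≤ pairSum p q := by
  induction p using Sym2.ind with | _ a b =>
  induction q using Sym2.ind with | _ c d =>
  rw [pairSum_mk]
  positivity

lemma pairSum_comm {X : Type*} [MetricSpace X] (p q : Sym2 X) : pairSum p q = pairSum q p := by
  induction p using Sym2.ind with | _ a b =>
  induction q using Sym2.ind with | _ c d =>
  rw [pairSum_mk, pairSum_mk, dist_comm a c, dist_comm a d, dist_comm b c, dist_comm b d]
  ring

lemma pairSum_triangle {X : Type*} [MetricSpace X] (p q r : Sym2 X) :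
    pairSum p r ≤ pairSum p q + pairSum q r := by
  induction p using Sym2.ind with | _ a b =>
  induction q using Sym2.ind with | _ c d =>
  induction r using Sym2.ind with | _ e f =>
  rw [pairSum_mk, pairSum_mk, pairSum_mk]
  have h1 := dist_triangle a c e
  have h2 := dist_triangle a d f
  have h3 := dist_triangle b d e
  have h4 := dist_triangle b c f
  linarith

theorem pairDist_is_metric {X : Type*} [MetricSpace X] :
    (∀ p : Sym2 X, pairDist p p = 0) ∧
    (∀ p q : Sym2 X, 0 ≤ pairDist p q) ∧
    (∀ p q : Sym2 X, pairDist p q = 0 → p = q) ∧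
    (∀ p q : Sym2 X, pairDist p q = pairDist q p) ∧
    (∀ p q r : Sym2 X, pairDist p r ≤ pairDist p q + pairDist q r) := by
  classical
  have hnn : ∀ p q : Sym2 X, 0 ≤ pairDist p q := by
    intro p q
    unfold pairDist
    split
    · exact le_refl 0
    · exact pairSum_nonneg p q
  refine ⟨fun p => by simp [pairDist], hnn, ?_, ?_, ?_⟩
  · intro p q h
    by_contra hne
    rw [pairDist, if_neg hne] at h
    induction p using Sym2.ind with | _ a b =>
    induction q using Sym2.ind with | _ c d =>
    rw [pairSum_mk] at h
    have hac : dist a c = 0 := by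
      have := dist_nonneg (x := a) (y := c)
      have := dist_nonneg (x := a) (y := d)
      have := dist_nonneg (x := b) (y := c)
      have := dist_nonneg (x := b) (y := d)
      linarith
    have hbd : dist b d = 0 := by
      have := dist_nonneg (x := a) (y := c)
      have := dist_nonneg (x := a) (y := d)
      have := dist_nonneg (x := b) (y := c)
      have := dist_nonneg (x := b) (y := d)
      linarith
    exact hne (by rw [dist_eq_zero.mp hac, dist_eq_zero.mp hbd])
  · intro p q
    unfold pairDist
    by_cases h : p = q
    · simp [h]
    · rw [if_neg h, if_neg (Ne.symm h), pairSum_comm]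
  · intro p q r
    simp only [pairDist]
    by_cases hpq : p = q
    · subst hpq; simp
    by_cases hqr : q = r
    · subst hqr; simp
    rw [if_neg hpq, if_neg hqr]
    by_cases hpr : p = r
    · rw [if_pos hpr]
      have := pairSum_nonneg p q
      have := pairSum_nonneg q r
      linarith
    · rw [if_neg hpr]; exact pairSum_triangle p q r
end

section
/- The four-point metric space X = {x, y, m₁, m₂} with d(x,y) = 2 and all other nonzero distances equal to 1 is a Ptolemy metric space. -/
set_option maxHeartbeats 1000000


/-- The distance on the four-point space `{x, y, m₁, m₂}` (encoded as `0, 1, 2, 3`)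
with `d(x,y) = 2` and all other nonzero distances equal to `1`. -/
def fourPointDist (i j : Fin 4) : ℝ :=
  if i = j then 0 else if (i = 0 ∧ j = 1) ∨ (i = 1 ∧ j = 0) then 2 else 1

theorem four_point_space_ptolemy :
    (∀ i j : Fin 4, fourPointDist i j = fourPointDist j i) ∧
    (∀ i j : Fin 4, fourPointDist i j = 0 ↔ i = j) ∧
    (∀ i j : Fin 4, 0 ≤ fourPointDist i j) ∧
    (∀ i j k : Fin 4, fourPointDist i k ≤ fourPointDist i j + fourPointDist j k) ∧
    (∀ a b c e : Fin 4, fourPointDist a b * fourPointDist c e ≤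
      fourPointDist a c * fourPointDist b e + fourPointDist a e * fourPointDist b c) := by
  refine ⟨?_, ?_, ?_, ?_, ?_⟩
  · intro i j; fin_cases i <;> fin_cases j <;> norm_num [fourPointDist, Fin.ext_iff]
  · intro i j; fin_cases i <;> fin_cases j <;> norm_num [fourPointDist, Fin.ext_iff]
  · intro i j; fin_cases i <;> fin_cases j <;> norm_num [fourPointDist, Fin.ext_iff]
  · intro i j k; fin_cases i <;> fin_cases j <;> fin_cases k <;> norm_num [fourPointDist, Fin.ext_iff]
  · intro a b c e
    fin_cases a <;> fin_cases b <;> fin_cases c <;> fin_cases e <;> norm_num [fourPointDist, Fin.ext_iff]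
end
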